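/- arXiv:1806.08697 — 9 statements merged into one kernel-verified Lean document; each statement's English description precedes it below -/
import Mathlib

section
/- If n = k·p² is a base-b Fermat pseudoprime (i.e., n is composite, gcd(n,b)=1, and b^(n-1) ≡ 1 (mod n)) where p is prime and k ≥ 1 is an integer, then b^(p-1) ≡ 1 (mod p²). -/
theorem fermat_psp_square_factor_wieferich
    (b k p n : ℕ) (hb : 2 ≤ b) (hp : p.Prime) (hk : 1 ≤ k)
    (hn : n = k * p ^ 2)
    (hcomp : ¬ n.Prime) (hn1 : 1 < n)
    (hgcd : Nat.gcd n b = 1)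
    (hferm : b ^ (n - 1) ≡ 1 [MOD n]) :
    b ^ (p - 1) ≡ 1 [MOD p ^ 2] := by
  have hdvd : p ^ 2 ∣ n := hn ▸ dvd_mul_left _ _
  have hpn : p ∣ n := dvd_trans (dvd_pow_self p two_ne_zero) hdvd
  have hco : Nat.Coprime b (p ^ 2) :=
    (Nat.coprime_comm.mp hgcd).coprime_dvd_right hdvd
  -- mod p^2 version of Fermat congruence
  have hferm2 : b ^ (n - 1) ≡ 1 [MOD p ^ 2] := hferm.of_dvd hdvd
  have hcast : (b : ZMod (p ^ 2)) ^ (n - 1) = 1 := by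
    have := (ZMod.natCast_eq_natCast_iff _ _ _).mpr hferm2
    push_cast at this
    simpa using this
  set d := orderOf (b : ZMod (p ^ 2)) with hd
  have hdn : d ∣ n - 1 := orderOf_dvd_of_pow_eq_one hcast
  -- d divides totient p^2 = p * (p-1)
  have hunit : (ZMod.unitOfCoprime b hco : ZMod (p ^ 2)) = b := ZMod.coe_unitOfCoprime _ _
  have hdtot : d ∣ p * (p - 1) := by
    have h1 : orderOf (ZMod.unitOfCoprime b hco) ∣ Nat.totient (p ^ 2) :=
      orderOf_dvd_of_pow_eq_one (ZMod.pow_totient _)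
    have h2 : orderOf (ZMod.unitOfCoprime b hco) = d := by
      rw [hd, ← hunit, orderOf_units]
    have h3 : Nat.totient (p ^ 2) = p * (p - 1) := by
      rw [Nat.totient_prime_pow hp (by norm_num)]
      ring_nf
    rwa [h2, h3] at h1
  -- p does not divide d
  have hpd : Nat.Coprime d p := by
    rw [Nat.coprime_comm]
    refine (Nat.Prime.coprime_iff_not_dvd hp).mpr ?_
    intro hcontra
    have : p ∣ n - (n - 1) := Nat.dvd_sub hpn (hcontra.trans hdn)
    rw [Nat.sub_sub_self (le_of_lt hn1)] at this
    have h4 := Nat.le_of_dvd one_pos this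
    have h5 := hp.two_le
    omega
  have hdp1 : d ∣ p - 1 := hpd.dvd_of_dvd_mul_left hdtot
  have hpow : (b : ZMod (p ^ 2)) ^ (p - 1) = 1 := orderOf_dvd_iff_pow_eq_one.mp hdp1
  have := (ZMod.natCast_eq_natCast_iff (b ^ (p - 1)) 1 (p ^ 2)).mp (by push_cast; simpa using hpow)
  exact this
end

section
/- If n = k·p² is a base-b Fermat pseudoprime where p is prime and k ≥ 1, then b^(k-1) ≡ 1 (mod p²). -/
theorem fermat_psp_square_factor_preproduct
    (b k p n : ℕ) (hb : 2 ≤ b) (hp : p.Prime) (hk : 1 ≤ k)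
    (hn : n = k * p ^ 2)
    (hcomp : ¬ n.Prime) (hn1 : 1 < n)
    (hgcd : Nat.gcd n b = 1)
    (hferm : b ^ (n - 1) ≡ 1 [MOD n]) :
    b ^ (k - 1) ≡ 1 [MOD p ^ 2] := by
  have hpdvd : p ^ 2 ∣ n := hn ▸ dvd_mul_left _ _
  have hferm2 : b ^ (n - 1) ≡ 1 [MOD p ^ 2] := Nat.ModEq.of_dvd hpdvd hferm
  have hp2 : 1 < p ^ 2 := one_lt_pow₀ hp.one_lt (by norm_num)
  haveI : NeZero (p ^ 2) := ⟨by omega⟩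
  haveI : Fact p.Prime := ⟨hp⟩
  have hcop : Nat.Coprime (p ^ 2) b :=
    Nat.Coprime.coprime_dvd_left hpdvd hgcd
  set x : ZMod (p ^ 2) := (b : ZMod (p ^ 2)) with hx
  have hx1 : x ^ (n - 1) = 1 := by
    have h := (ZMod.natCast_eq_natCast_iff _ _ _).mpr hferm2
    push_cast at h
    exact h
  set d := orderOf x with hd
  have hdn : d ∣ n - 1 := orderOf_dvd_of_pow_eq_one hx1
  have hu : IsUnit x := (ZMod.isUnit_iff_coprime b (p ^ 2)).mpr hcop.symm
  have hdt : d ∣ Nat.totient (p ^ 2) := by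
    have h1 := ZMod.pow_totient hu.unit
    have h2 : x ^ Nat.totient (p ^ 2) = 1 := by
      have h3 := congrArg (Units.val) h1
      rw [Units.val_pow_eq_pow_val, hu.unit_spec] at h3
      simpa using h3
    exact orderOf_dvd_of_pow_eq_one h2
  have htot : Nat.totient (p ^ 2) = p * (p - 1) := by
    rw [Nat.totient_prime_pow hp (by norm_num)]
    ring_nf
  rw [htot] at hdt
  have hpnd : ¬ p ∣ d := by
    intro hcon
    have h1 : p ∣ n - 1 := hcon.trans hdn
    have h2 : p ∣ n := dvd_trans (dvd_pow_self p (by norm_num)) hpdvd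
    have h3 : p ∣ n - (n - 1) := Nat.dvd_sub h2 h1
    have h4 : n - (n - 1) = 1 := by omega
    rw [h4] at h3
    exact hp.one_lt.ne' (Nat.eq_one_of_dvd_one h3 ▸ rfl)
  have hcopdp : Nat.Coprime p d := (Nat.Prime.coprime_iff_not_dvd hp).mpr hpnd
  have hdp1 : d ∣ p - 1 := (Nat.Coprime.dvd_of_dvd_mul_left hcopdp.symm hdt)
  have hps : p ^ 2 - 1 = (p - 1) * (p + 1) := by
    have h := hp.pos
    rw [Nat.sub_mul, one_mul, Nat.mul_add, mul_one, ← sq]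
    omega
  have hdsq : d ∣ p ^ 2 - 1 := hps ▸ Dvd.dvd.mul_right hdp1 (p + 1)
  have hdiff : (n - 1) - (k - 1) = k * (p ^ 2 - 1) := by
    have hple : 1 ≤ p ^ 2 := hp2.le
    have : k ≤ n := by nlinarith [hn]
    rw [hn]; cases k with
    | zero => omega
    | succ m => rw [Nat.mul_sub_one, Nat.succ_mul]; omega
  have hddiff : d ∣ (n - 1) - (k - 1) := hdiff ▸ Dvd.dvd.mul_left hdsq k
  have hdk : d ∣ k - 1 := by
    have h5 := Nat.dvd_sub hdn hddiff
    have hkn : k ≤ n := hn ▸ Nat.le_mul_of_pos_right k (by omega)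
    have : k - 1 ≤ n - 1 := by omega
    rwa [Nat.sub_sub_self this] at h5
  have hxk : x ^ (k - 1) = 1 := orderOf_dvd_iff_pow_eq_one.mp hdk
  have : ((b ^ (k - 1) : ℕ) : ZMod (p ^ 2)) = ((1 : ℕ) : ZMod (p ^ 2)) := by
    push_cast
    exact hxk
  exact (ZMod.natCast_eq_natCast_iff _ _ _).mp this
end

section
/- Let U be the Lucas sequence with parameters (P,Q), D = P² - 4Q, and ε(m) the Jacobi symbol (D | m). If n = k·p² is a (P,Q)-Lucas pseudoprime with ε(n) = -1, where p is prime and k ≥ 1, then U_{p-ε(p)} ≡ 0 (mod p²). -/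
/-- The Lucas sequence `U` with parameters `(P, Q)`. -/
def lucasU (P Q : ℤ) : ℕ → ℤ
  | 0 => 0
  | 1 => 1
  | (n + 2) => P * lucasU P Q (n + 1) - Q * lucasU P Q n

/-!
Write `e = p - ε(p)`. The law of apparition gives `p ∣ U_e`: in `𝔽_{p²}` the roots `α, β` of
`X² - PX + Q` are fixed by Frobenius when `ε(p) = 1` and swapped when `ε(p) = -1`, so `α^e = β^e`.
The expansion `U_{m(t+1)} ≡ (t+1) U_m U_{m+1}^t (mod U_m²)` then gives `p² ∣ U_{ep}`, while
`p² ∣ n ∣ U_{n+1}`. Modulo any `N` coprime to `Q` the indices `m` with `N ∣ U_m` are closed under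
`gcd`, so `p² ∣ U_g` with `g = gcd(ep, n+1) = gcd(e, n+1)` (as `p ∤ n + 1`), and `g ∣ e`.
-/

section

variable {P Q : ℤ}

theorem lucasU_add_two (n : ℕ) :
    lucasU P Q (n + 2) = P * lucasU P Q (n + 1) - Q * lucasU P Q n := rfl

theorem lucasU_add (m n : ℕ) :
    lucasU P Q (m + n) = lucasU P Q m * lucasU P Q (n + 1) + lucasU P Q (m + 1) * lucasU P Q n
      - P * lucasU P Q m * lucasU P Q n := by
  induction m using Nat.twoStepInduction with
  | zero => simp [lucasU]
  | one => rw [add_comm]; simp [lucasU]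
  | more m ih₀ ih₁ =>
    have hm₂ : lucasU P Q (m + 2) = P * lucasU P Q (m + 1) - Q * lucasU P Q m := rfl
    have hm₃ : lucasU P Q (m + 2 + 1) = P * lucasU P Q (m + 2) - Q * lucasU P Q (m + 1) := rfl
    rw [show m + 2 + n = m + n + 2 by ring, lucasU_add_two, show m + n + 1 = m + 1 + n by ring,
      ih₀, ih₁, show m + 1 + 1 = m + 2 from rfl, hm₃, hm₂]
    ring

theorem lucasU_cassini (m : ℕ) :
    lucasU P Q (m + 1) ^ 2 - P * lucasU P Q (m + 1) * lucasU P Q m + Q * lucasU P Q m ^ 2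
      = Q ^ m := by
  induction m with
  | zero => simp [lucasU]
  | succ m ih =>
    rw [lucasU_add_two]
    linear_combination Q * ih

theorem isCoprime_lucasU_succ {N : ℤ} {m : ℕ} (hQ : IsCoprime N Q) (h : N ∣ lucasU P Q m) :
    IsCoprime N (lucasU P Q (m + 1)) := by
  obtain ⟨c, hc⟩ := h
  have hQm : Q ^ m = lucasU P Q (m + 1) * (lucasU P Q (m + 1) - P * (N * c))
      + N * (Q * c * (N * c)) := by
    rw [← lucasU_cassini, hc]; ring
  have := hQ.pow_right (n := m)
  rw [hQm] at this
  exact this.of_add_mul_left_right.of_mul_right_left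

theorem lucasU_dvd_lucasU {m n : ℕ} (h : m ∣ n) : lucasU P Q m ∣ lucasU P Q n := by
  obtain ⟨t, rfl⟩ := h
  induction t with
  | zero => simp [lucasU]
  | succ t ih =>
    rw [Nat.mul_succ, lucasU_add]
    exact dvd_sub (dvd_add (ih.mul_right _) (dvd_mul_left _ _)) (dvd_mul_left _ _)

theorem dvd_lucasU_of_dvd_lucasU_add {N : ℤ} {m j : ℕ} (hQ : IsCoprime N Q)
    (hm : N ∣ lucasU P Q m) (h : N ∣ lucasU P Q (m + j)) : N ∣ lucasU P Q j := by
  have : N ∣ lucasU P Q (m + 1) * lucasU P Q j := by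
    have hsplit : lucasU P Q (m + 1) * lucasU P Q j = lucasU P Q (m + j)
        - lucasU P Q m * (lucasU P Q (j + 1) - P * lucasU P Q j) := by
      linear_combination -(lucasU_add (P := P) (Q := Q) m j)
    rw [hsplit]
    exact dvd_sub h (hm.mul_right _)
  exact (isCoprime_lucasU_succ hQ hm).dvd_of_dvd_mul_left this

theorem dvd_lucasU_of_dvd_lucasU_add_mul {N : ℤ} {m j : ℕ} (hQ : IsCoprime N Q)
    (hm : N ∣ lucasU P Q m) (q : ℕ) (h : N ∣ lucasU P Q (j + m * q)) : N ∣ lucasU P Q j := by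
  induction q with
  | zero => simpa using h
  | succ q ih =>
    refine ih (dvd_lucasU_of_dvd_lucasU_add hQ hm ?_)
    rwa [show m + (j + m * q) = j + m * (q + 1) by ring]

theorem dvd_lucasU_gcd {N : ℤ} {m n : ℕ} (hQ : IsCoprime N Q)
    (hm : N ∣ lucasU P Q m) (hn : N ∣ lucasU P Q n) : N ∣ lucasU P Q (Nat.gcd m n) := by
  induction m, n using Nat.gcd.induction with
  | H0 n => simpa using hn
  | H1 m n _ ih =>
    rw [Nat.gcd_rec]
    exact ih (dvd_lucasU_of_dvd_lucasU_add_mul hQ hm (n / m) (by rwa [Nat.mod_add_div])) hm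

theorem lucasU_mul_add_one_modEq (m t : ℕ) :
    lucasU P Q (m * t + 1) ≡ lucasU P Q (m + 1) ^ t [ZMOD lucasU P Q m ^ 2] := by
  induction t with
  | zero => simp [lucasU]
  | succ t ih =>
    have hsplit : lucasU P Q (m * (t + 1) + 1)
        = lucasU P Q (m * t + 1) * lucasU P Q (m + 1)
          - Q * (lucasU P Q (m * t) * lucasU P Q m) := by
      rw [show m * (t + 1) + 1 = m * t + (m + 1) by ring, lucasU_add, lucasU_add_two]
      ring
    have hnil : lucasU P Q (m * t) * lucasU P Q m ≡ 0 [ZMOD lucasU P Q m ^ 2] :=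
      Int.modEq_zero_iff_dvd.mpr
        (by rw [sq]; exact mul_dvd_mul_right (lucasU_dvd_lucasU (dvd_mul_right m t)) _)
    rw [hsplit, pow_succ (lucasU P Q (m + 1)) t]
    simpa using (ih.mul_right (lucasU P Q (m + 1))).sub (hnil.mul_left Q)

theorem lucasU_mul_succ_modEq (m t : ℕ) :
    lucasU P Q (m * (t + 1)) ≡ (t + 1) * lucasU P Q m * lucasU P Q (m + 1) ^ t
      [ZMOD lucasU P Q m ^ 2] := by
  induction t with
  | zero => simp
  | succ t ih =>
    have hnil : lucasU P Q (m * (t + 1)) * lucasU P Q m ≡ 0 [ZMOD lucasU P Q m ^ 2] :=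
      Int.modEq_zero_iff_dvd.mpr
        (by rw [sq]; exact mul_dvd_mul_right (lucasU_dvd_lucasU (dvd_mul_right m _)) _)
    rw [show m * (t + 1 + 1) = m * (t + 1) + m by ring, lucasU_add]
    calc _ ≡ (t + 1) * lucasU P Q m * lucasU P Q (m + 1) ^ t * lucasU P Q (m + 1)
          + lucasU P Q (m + 1) ^ (t + 1) * lucasU P Q m - P * 0 [ZMOD lucasU P Q m ^ 2] := by
          refine ((ih.mul_right _).add ((lucasU_mul_add_one_modEq m (t + 1)).mul_right _)).sub ?_
          rw [mul_assoc]; exact hnil.mul_left P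
      _ = _ := by push_cast; ring

theorem sq_dvd_lucasU_mul_of_dvd {c m : ℕ} (h : (c : ℤ) ∣ lucasU P Q m) :
    (c : ℤ) ^ 2 ∣ lucasU P Q (m * c) := by
  cases c with
  | zero => simp [lucasU]
  | succ t =>
    have hc : (↑(t + 1) : ℤ) ^ 2 ∣ lucasU P Q m ^ 2 := pow_dvd_pow_of_dvd h 2
    refine Int.modEq_zero_iff_dvd.mp (((lucasU_mul_succ_modEq m t).of_dvd hc).trans ?_)
    refine Int.modEq_zero_iff_dvd.mpr ?_
    push_cast
    rw [sq, mul_assoc]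
    exact mul_dvd_mul_left _ (h.mul_right _)

theorem sub_mul_lucasU {R : Type*} [CommRing R] {α β : R} (hsum : α + β = P) (hprod : α * β = Q)
    (n : ℕ) : (α - β) * lucasU P Q n = α ^ n - β ^ n := by
  induction n using Nat.twoStepInduction with
  | zero => simp [lucasU]
  | one => simp [lucasU]
  | more n ih₀ ih₁ =>
    rw [lucasU_add_two]
    push_cast
    rw [← hsum, ← hprod]
    linear_combination (α + β) * ih₁ - α * β * ih₀

theorem lucasU_cast_eq_zero_of_pow_eq {F : Type*} [Field F] {α β : F} (hsum : α + β = P)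
    (hprod : α * β = Q) (hne : α ≠ β) {k : ℕ} (hk : α ^ k = β ^ k) : (lucasU P Q k : F) = 0 := by
  have := sub_mul_lucasU hsum hprod k
  rwa [hk, sub_self, mul_eq_zero, or_iff_right (sub_ne_zero.mpr hne)] at this

section

variable {p : ℕ} [Fact p.Prime]

theorem intCast_pow_char {R : Type*} [CommRing R] [CharP R p] (z : ℤ) : (z : R) ^ p = z := by
  rw [← frobenius_def, map_intCast]

theorem isSquare_algebraMap_galoisField (hp2 : p ≠ 2) (a : ZMod p) :
    IsSquare (algebraMap (ZMod p) (GaloisField p 2) a) := by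
  rcases eq_or_ne a 0 with rfl | ha
  · simp
  let := Fintype.ofFinite (GaloisField p 2)
  have hchar : ringChar (GaloisField p 2) ≠ 2 := by rwa [ringChar.eq (GaloisField p 2) p]
  -- `a ^ (p - 1) = 1` and `p - 1` divides `(p ^ 2 - 1) / 2`
  have hcard : Fintype.card (GaloisField p 2) / 2 = (p - 1) * ((p + 1) / 2) := by
    rw [← Nat.card_eq_fintype_card, GaloisField.card p 2 two_ne_zero]
    obtain ⟨j, rfl⟩ := (Fact.out : p.Prime).odd_of_ne_two hp2
    rw [show (2 * j + 1) ^ 2 = 2 * (2 * j * (j + 1)) + 1 by ring,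
      show 2 * j + 1 - 1 = 2 * j by omega, show (2 * j + 1 + 1) / 2 = j + 1 by omega]
    omega
  rw [FiniteField.isSquare_iff hchar (by simpa using ha), hcard, pow_mul, ← map_pow,
    ZMod.pow_card_sub_one_eq_one ha, map_one, one_pow]

theorem pow_char_eq_legendreSym_mul {F : Type*} [Field F] [CharP F p] (hp2 : p ≠ 2) {D : ℤ}
    {δ : F} (hδ : δ ^ 2 = D) : δ ^ p = legendreSym p D * δ := by
  have heuler : ((legendreSym p D : ℤ) : F) = (D : F) ^ (p / 2) := by
    simpa using congrArg (ZMod.castHom dvd_rfl F) (legendreSym.eq_pow p D)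
  rw [heuler, ← hδ, ← pow_mul, ← pow_succ,
    Nat.two_mul_div_two_add_one_of_odd ((Fact.out : p.Prime).odd_of_ne_two hp2)]

theorem lucasU_cast_sub_legendreSym_eq_zero {F : Type*} [Field F] [CharP F p] (hp2 : p ≠ 2)
    {D : ℤ} (hD : D = P ^ 2 - 4 * Q) (hQ : (Q : F) ≠ 0) {δ : F} (hδ : δ ^ 2 = D) (hδ0 : δ ≠ 0) :
    (lucasU P Q ((p - legendreSym p D).toNat) : F) = 0 := by
  have h2 : (2 : F) ≠ 0 := Ring.two_ne_zero (by rwa [ringChar.eq F p])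
  set α : F := (P + δ) / 2 with hα
  set β : F := (P - δ) / 2 with hβ
  have hsum : α + β = P := by rw [hα, hβ]; field_simp; ring
  have hprod : α * β = Q := by
    rw [hα, hβ]
    field_simp
    linear_combination -hδ - (by push_cast [hD]; ring : ((D : ℤ) : F) = P ^ 2 - 4 * Q)
  have hne : α ≠ β := by
    rw [hα, hβ, Ne, div_left_inj' h2]
    refine fun h => hδ0 ((mul_eq_zero.mp ?_).resolve_left h2)
    linear_combination h
  have hfrob : ∀ s : F, ((P + s) / 2) ^ p = (P + s ^ p) / 2 := fun s => by
    rw [div_pow, add_pow_char, intCast_pow_char, show (2 : F) = ((2 : ℤ) : F) by norm_num,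
      intCast_pow_char]
  have hαp : α ^ p = (P + legendreSym p D * δ) / 2 := by
    rw [hfrob, pow_char_eq_legendreSym_mul hp2 hδ]
  have hβp : β ^ p = (P - legendreSym p D * δ) / 2 := by
    rw [hβ, sub_eq_add_neg, hfrob, ((Fact.out : p.Prime).odd_of_ne_two hp2).neg_pow,
      pow_char_eq_legendreSym_mul hp2 hδ, ← sub_eq_add_neg]
  have hDp : (D : ZMod p) ≠ 0 := by
    rw [← (ZMod.castHom dvd_rfl F).injective.ne_iff, map_intCast, map_zero, ← hδ]
    exact pow_ne_zero 2 hδ0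
  refine lucasU_cast_eq_zero_of_pow_eq hsum hprod hne ?_
  rcases legendreSym.eq_one_or_neg_one p hDp with hε | hε <;> rw [hε] at hαp hβp ⊢
  · -- Frobenius fixes `α` and `β`, which are nonzero since `α * β = Q`
    rw [Int.cast_one, one_mul, ← hα] at hαp
    rw [Int.cast_one, one_mul, ← hβ] at hβp
    have hunit : ∀ x : F, x ≠ 0 → x ^ p = x → x ^ (p - 1) = 1 := fun x hx h =>
      mul_left_cancel₀ hx (by rw [← pow_succ', Nat.sub_add_cancel NeZero.one_le, h, mul_one])
    rw [show ((p : ℤ) - 1).toNat = p - 1 by omega,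
      hunit α (left_ne_zero_of_mul (hprod ▸ hQ)) hαp,
      hunit β (right_ne_zero_of_mul (hprod ▸ hQ)) hβp]
  · -- Frobenius swaps `α` and `β`
    rw [Int.cast_neg, Int.cast_one, neg_one_mul, ← sub_eq_add_neg, ← hβ] at hαp
    rw [Int.cast_neg, Int.cast_one, neg_one_mul, sub_neg_eq_add, ← hα] at hβp
    rw [show ((p : ℤ) - -1).toNat = p + 1 by omega, pow_succ, pow_succ, hαp, hβp, mul_comm]

theorem dvd_lucasU_sub_legendreSym (hp2 : p ≠ 2) {D : ℤ} (hD : D = P ^ 2 - 4 * Q)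
    (hQ : ¬ (p : ℤ) ∣ Q) (hDp : ¬ (p : ℤ) ∣ D) :
    (p : ℤ) ∣ lucasU P Q ((p - legendreSym p D).toNat) := by
  rw [← CharP.intCast_eq_zero_iff (GaloisField p 2) p] at hQ hDp ⊢
  obtain ⟨δ, hδ⟩ := isSquare_algebraMap_galoisField hp2 (D : ZMod p)
  rw [map_intCast, ← sq] at hδ
  exact lucasU_cast_sub_legendreSym_eq_zero hp2 hD hQ hδ.symm
    (fun h => hDp (by rw [hδ, h, zero_pow two_ne_zero]))

end

end

theorem lucas_psp_square_factor_wallsunsun_general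
    (P Q : ℤ) (k p n : ℕ) (hp : p.Prime)
    (D : ℤ) (hD : D = P ^ 2 - 4 * Q)
    (hn : n = k * p ^ 2)
    (hgcd : Int.gcd (n : ℤ) (2 * Q * D) = 1)
    (hlucas : (n : ℤ) ∣ lucasU P Q (n + 1)) :
    ((p : ℤ) ^ 2) ∣ lucasU P Q (((p : ℤ) - jacobiSym D p).toNat) := by
  have := Fact.mk hp
  have hsq : (p : ℤ) ^ 2 ∣ n := ⟨k, by rw [hn]; push_cast; ring⟩
  have hcop : IsCoprime (p : ℤ) (2 * Q * D) :=
    (Int.isCoprime_iff_gcd_eq_one.mpr hgcd).of_isCoprime_of_dvd_left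
      ((dvd_pow_self _ two_ne_zero).trans hsq)
  have hndvd {x : ℤ} : IsCoprime (p : ℤ) x → ¬ (p : ℤ) ∣ x :=
    (Nat.prime_iff_prime_int.mp hp).coprime_iff_not_dvd.mp
  have hp2 : p ≠ 2 := by
    rintro rfl
    exact hndvd hcop.of_mul_right_left.of_mul_right_left (by norm_num)
  have hQ : IsCoprime (p : ℤ) Q := hcop.of_mul_right_left.of_mul_right_right
  have hpn : p.Coprime (n + 1) := by
    refine (Nat.Prime.coprime_iff_not_dvd hp).mpr fun h => hp.one_lt.ne' (Nat.dvd_one.mp ?_)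
    exact (Nat.dvd_add_right (hn ▸ dvd_mul_of_dvd_right (dvd_pow_self p two_ne_zero) k)).mp h
  have happ := dvd_lucasU_sub_legendreSym hp2 hD (hndvd hQ) (hndvd hcop.of_mul_right_right)
  rw [jacobiSym.legendreSym.to_jacobiSym] at happ
  set e := ((p : ℤ) - jacobiSym D p).toNat
  have hrep : (p : ℤ) ^ 2 ∣ lucasU P Q (e * p) := sq_dvd_lucasU_mul_of_dvd happ
  have hgcd_dvd := dvd_lucasU_gcd hQ.pow_left hrep (hsq.trans hlucas)
  rw [hpn.gcd_mul_right_cancel e] at hgcd_dvd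
  exact hgcd_dvd.trans (lucasU_dvd_lucasU (Nat.gcd_dvd_left e (n + 1)))

theorem lucas_psp_square_factor_wallsunsun
    (P Q : ℤ) (k p n : ℕ) (hp : p.Prime) (hk : 1 ≤ k)
    (D : ℤ) (hD : D = P ^ 2 - 4 * Q)
    (hn : n = k * p ^ 2)
    (hcomp : ¬ n.Prime) (hn1 : 1 < n)
    (hgcd : Int.gcd (n : ℤ) (2 * Q * D) = 1)
    (heps : jacobiSym D n = -1)
    (hlucas : (n : ℤ) ∣ lucasU P Q (n + 1)) :
    ((p : ℤ) ^ 2) ∣ lucasU P Q (((p : ℤ) - jacobiSym D p).toNat) :=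
  lucas_psp_square_factor_wallsunsun_general P Q k p n hp D hD hn hgcd hlucas
end

section
/- Let U be the Lucas sequence with parameters (P,Q), D = P² - 4Q, and ε the Jacobi symbol with respect to D. If n = k·p² is a (P,Q)-Lucas pseudoprime with ε(n) = -1, where p is prime and k ≥ 1, then U_{k-ε(k)} ≡ 0 (mod p²). -/
namespace LucasAux
variable (P Q : ℤ)

lemma lucasU_two_step (n : ℕ) :
    lucasU P Q (n + 2) = P * lucasU P Q (n + 1) - Q * lucasU P Q n := rfl

lemma lucasU_two_step' (n : ℕ) :
    lucasU P Q (n + 1 + 1) = P * lucasU P Q (n + 1) - Q * lucasU P Q n := rfl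

lemma lucasU_addA (a b : ℕ) :
    lucasU P Q (a + b + 1) =
      lucasU P Q (a + 1) * lucasU P Q (b + 1) - Q * lucasU P Q a * lucasU P Q b := by
  induction b using Nat.twoStepInduction with
  | zero => simp [lucasU]
  | one => show lucasU P Q (a + 2) = _; rw [lucasU_two_step]; simp [lucasU]; ring
  | more b ih1 ih2 =>
      rw [show a + (b+1) + 1 = (a + b + 1) + 1 by omega, lucasU_two_step' P Q b] at ih2
      rw [show a + (b+2) + 1 = (a + b + 1) + 2 by omega, lucasU_two_step,
        lucasU_two_step P Q (b+1), lucasU_two_step P Q b]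
      linear_combination P * ih2 - Q * ih1

lemma lucasU_addB (a b : ℕ) :
    lucasU P Q (a + b) =
      lucasU P Q (a + 1) * lucasU P Q b + lucasU P Q a * lucasU P Q (b + 1)
        - P * lucasU P Q a * lucasU P Q b := by
  induction b using Nat.twoStepInduction with
  | zero => simp [lucasU]
  | one => simp [lucasU]; ring
  | more b ih1 ih2 =>
      rw [show a + (b+1) = (a + b) + 1 by omega, lucasU_two_step' P Q b] at ih2
      rw [show a + (b+2) = (a + b) + 2 by omega, lucasU_two_step,
        lucasU_two_step P Q (b+1), lucasU_two_step P Q b]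
      linear_combination P * ih2 - Q * ih1

lemma lucasU_sq (m : ℕ) :
    lucasU P Q (m + 1) ^ 2 - P * lucasU P Q (m + 1) * lucasU P Q m
      + Q * lucasU P Q m ^ 2 = Q ^ m := by
  induction m with
  | zero => simp [lucasU]
  | succ m ih =>
      rw [lucasU_two_step']
      linear_combination Q * ih

lemma lucasU_cast {R : Type*} [CommRing R] (s : R) (hs : s ^ 2 = (P : R) ^ 2 - 4 * Q)
    (n : ℕ) :
    2 ^ n * s * ((lucasU P Q n : ℤ) : R) = ((P : R) + s) ^ n - ((P : R) - s) ^ n := by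
  induction n using Nat.twoStepInduction with
  | zero => simp [lucasU]
  | one => simp [lucasU]; ring
  | more n ih1 ih2 =>
      rw [lucasU_two_step]
      push_cast
      have h4 : ((P : R) + s) * ((P : R) - s) = 4 * Q := by linear_combination -hs
      calc 2 ^ (n+2) * s * ((P:R) * ((lucasU P Q (n+1) : ℤ):R) - (Q:R) * ((lucasU P Q n : ℤ):R))
          = 2*(P:R) * (2 ^ (n+1) * s * ((lucasU P Q (n+1) : ℤ) : R))
            - 4*(Q:R) * (2 ^ n * s * ((lucasU P Q n : ℤ) : R)) := by ring
        _ = ((P:R)+s)^(n+2) - ((P:R)-s)^(n+2) := by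
            rw [ih2, ih1, ← h4]; ring


lemma lucasU_mul (m : ℕ) (N : ℤ) (h : N ∣ lucasU P Q m ^ 2) (t : ℕ) :
    N ∣ lucasU P Q ((t+1)*m) - (t+1) * lucasU P Q m * lucasU P Q (m+1) ^ t ∧
    N ∣ lucasU P Q ((t+1)*m + 1) - lucasU P Q (m+1) ^ (t+1) := by
  obtain ⟨w, hw⟩ := h
  induction t with
  | zero => simp
  | succ t ih =>
      obtain ⟨⟨x, hx⟩, ⟨y, hy⟩⟩ := ih
      have hB := lucasU_addB P Q ((t+1)*m) m
      have hA := lucasU_addA P Q ((t+1)*m) m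
      push_cast at hx hy ⊢
      constructor
      · refine ⟨y * lucasU P Q m + x * lucasU P Q (m+1) - P * x * lucasU P Q m
          - P * ((t:ℤ)+1) * lucasU P Q (m+1) ^ t * w, ?_⟩
        rw [show (t+1+1)*m = (t+1)*m + m by ring, hB]
        linear_combination lucasU P Q m * hy + (lucasU P Q (m+1) - P * lucasU P Q m) * hx
          - P * ((t:ℤ)+1) * lucasU P Q (m+1) ^ t * hw
      · refine ⟨y * lucasU P Q (m+1) - Q * x * lucasU P Q m
          - Q * ((t:ℤ)+1) * lucasU P Q (m+1) ^ t * w, ?_⟩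
        rw [show (t+1+1)*m + 1 = (t+1)*m + m + 1 by ring, hA]
        linear_combination lucasU P Q (m+1) * hy - Q * lucasU P Q m * hx
          - Q * ((t:ℤ)+1) * lucasU P Q (m+1) ^ t * hw

lemma lucasU_lift {p : ℕ} (hp : 0 < p) (m : ℕ) (hm : (p:ℤ) ∣ lucasU P Q m) :
    ((p:ℤ)^2) ∣ lucasU P Q (p * m) := by
  have h2 : ((p:ℤ)^2) ∣ lucasU P Q m ^ 2 := pow_dvd_pow_of_dvd hm 2
  obtain ⟨h1, -⟩ := lucasU_mul P Q m _ h2 (p - 1)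
  have he : (p - 1 + 1) = p := by omega
  rw [he] at h1
  rw [show ((p - 1 : ℕ) : ℤ) + 1 = (p : ℤ) by omega] at h1
  have h3 : ((p:ℤ)^2) ∣ (p : ℤ) * lucasU P Q m * lucasU P Q (m+1) ^ (p-1) := by
    obtain ⟨u, hu⟩ := hm
    exact ⟨u * lucasU P Q (m+1) ^ (p-1), by rw [hu]; ring⟩
  have := dvd_add h1 h3
  simpa using this


open Polynomial in
lemma prime_dvd_split {p : ℕ} (hp : p.Prime) (hodd : p ≠ 2)
    (hQ : ¬ (p:ℤ) ∣ Q) (hD : ¬ (p:ℤ) ∣ (P ^ 2 - 4 * Q))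
    (hsq : IsSquare (((P ^ 2 - 4 * Q : ℤ)) : ZMod p)) :
    (p:ℤ) ∣ lucasU P Q (p - 1) := by
  haveI : Fact p.Prime := ⟨hp⟩
  obtain ⟨s, hs⟩ := hsq
  have hs2 : s ^ 2 = (P : ZMod p) ^ 2 - 4 * (Q : ZMod p) := by
    rw [sq, ← hs]; push_cast; ring
  have key := lucasU_cast P Q s hs2 (p - 1)
  have h2 : (2 : ZMod p) ≠ 0 := by
    have : ((2:ℤ) : ZMod p) ≠ 0 := by
      rw [Ne, ZMod.intCast_zmod_eq_zero_iff_dvd]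
      exact fun h => hodd (((Nat.prime_dvd_prime_iff_eq hp Nat.prime_two).mp
        (Int.ofNat_dvd.mp (by exact_mod_cast h))))
    simpa using this
  have hDne : (((P ^ 2 - 4 * Q : ℤ)) : ZMod p) ≠ 0 := by
    rw [Ne, ZMod.intCast_zmod_eq_zero_iff_dvd]; exact hD
  have hQne : ((Q : ℤ) : ZMod p) ≠ 0 := by
    rw [Ne, ZMod.intCast_zmod_eq_zero_iff_dvd]; exact hQ
  have hsne : s ≠ 0 := by
    intro h; apply hDne; rw [hs, h, mul_zero]
  have hAB : ((P : ZMod p) + s) * ((P : ZMod p) - s) = 4 * Q := by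
    linear_combination -hs2
  have hABne : ((P : ZMod p) + s) * ((P : ZMod p) - s) ≠ 0 := by
    rw [hAB]
    exact mul_ne_zero (by rw [show (4:ZMod p) = 2^2 by norm_num]; exact pow_ne_zero 2 h2) hQne
  have hA : ((P : ZMod p) + s) ≠ 0 := fun h => hABne (by rw [h, zero_mul])
  have hB : ((P : ZMod p) - s) ≠ 0 := fun h => hABne (by rw [h, mul_zero])
  rw [ZMod.pow_card_sub_one_eq_one hA, ZMod.pow_card_sub_one_eq_one hB, sub_self] at key
  have : ((lucasU P Q (p-1) : ℤ) : ZMod p) = 0 := by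
    rcases mul_eq_zero.mp key with h | h
    · rcases mul_eq_zero.mp h with h | h
      · exact absurd h (pow_ne_zero _ h2)
      · exact absurd h hsne
    · exact h
  exact (ZMod.intCast_zmod_eq_zero_iff_dvd _ _).mp this

/-- Generic field lemma for the nonsplit case. -/
lemma cast_lucasU_succ_eq_zero {p : ℕ} (hp : p.Prime) (hodd : p ≠ 2)
    {K : Type*} [Field K] [CharP K p] (s : K)
    (hs : s ^ 2 = (P : K) ^ 2 - 4 * Q) (hsne : s ≠ 0) (hsp : s ^ p = -s) :
    ((lucasU P Q (p + 1) : ℤ) : K) = 0 := by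
  haveI : Fact p.Prime := ⟨hp⟩
  have hPp : (P : K) ^ p = (P : K) := by
    rw [← frobenius_def]; exact map_intCast _ _
  have hApow : ((P : K) + s) ^ p = (P : K) - s := by
    rw [add_pow_char, hPp, hsp]; ring
  have hBpow : ((P : K) - s) ^ p = (P : K) + s := by
    have h1 : (P : K) - s = (P : K) + (-s) := by ring
    rw [h1, add_pow_char, hPp, (hp.odd_of_ne_two hodd).neg_pow, hsp]; ring
  have key := lucasU_cast P Q s hs (p + 1)
  rw [pow_succ ((P : K) + s), pow_succ ((P : K) - s), hApow, hBpow] at key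
  have key0 : 2 ^ (p+1) * s * ((lucasU P Q (p+1) : ℤ) : K) = 0 := by
    rw [key]; ring
  have h2 : (2 : K) ≠ 0 := by
    intro h
    have h' : ((2:ℕ):K) = 0 := by exact_mod_cast h
    exact (fun hd => hodd ((Nat.prime_dvd_prime_iff_eq hp Nat.prime_two).mp hd))
      ((CharP.cast_eq_zero_iff K p 2).mp h')
  rcases mul_eq_zero.mp key0 with h | h
  · rcases mul_eq_zero.mp h with h | h
    · exact absurd h (pow_ne_zero _ h2)
    · exact absurd h hsne
  · exact h

open Polynomial in
lemma prime_dvd_nonsplit {p : ℕ} (hp : p.Prime) (hodd : p ≠ 2)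
    (hD : ¬ (p:ℤ) ∣ (P ^ 2 - 4 * Q))
    (hns : ¬ IsSquare (((P ^ 2 - 4 * Q : ℤ)) : ZMod p)) :
    (p:ℤ) ∣ lucasU P Q (p + 1) := by
  haveI : Fact p.Prime := ⟨hp⟩
  have hirr : Irreducible (X ^ 2 - C ((P ^ 2 - 4 * Q : ℤ) : ZMod p)) := by
    refine X_pow_sub_C_irreducible_of_prime Nat.prime_two ?_
    intro b hb
    exact hns ⟨b, by rw [← hb, sq]⟩
  haveI : Fact (Irreducible (X ^ 2 - C ((P ^ 2 - 4 * Q : ℤ) : ZMod p))) := ⟨hirr⟩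
  haveI : CharP (AdjoinRoot (X ^ 2 - C ((P ^ 2 - 4 * Q : ℤ) : ZMod p))) p :=
    charP_of_injective_algebraMap
      (algebraMap (ZMod p) (AdjoinRoot (X ^ 2 - C ((P ^ 2 - 4 * Q : ℤ) : ZMod p)))).injective p
  have hDne : ((P ^ 2 - 4 * Q : ℤ) : ZMod p) ≠ 0 := by
    rw [Ne, ZMod.intCast_zmod_eq_zero_iff_dvd]; exact hD
  have hleg : legendreSym p (P ^ 2 - 4 * Q) = -1 := by
    rcases legendreSym.eq_one_or_neg_one p hDne with h | h
    · exact absurd ((legendreSym.eq_one_iff p hDne).mp h) hns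
    · exact h
  have heuler : ((P ^ 2 - 4 * Q : ℤ) : ZMod p) ^ (p / 2) = -1 := by
    have h1 := legendreSym.eq_pow p (P ^ 2 - 4 * Q)
    rw [hleg] at h1
    rw [← h1]; push_cast; ring
  have hpodd : p = 2 * (p / 2) + 1 := by
    have : p % 2 = 1 := Nat.odd_iff.mp (hp.odd_of_ne_two hodd)
    omega
  set K := AdjoinRoot (X ^ 2 - C ((P ^ 2 - 4 * Q : ℤ) : ZMod p)) with hK
  set s : K := AdjoinRoot.root (X ^ 2 - C ((P ^ 2 - 4 * Q : ℤ) : ZMod p)) with hsdef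
  have hs2' : s ^ 2 = algebraMap (ZMod p) K ((P ^ 2 - 4 * Q : ℤ) : ZMod p) := by
    rw [AdjoinRoot.algebraMap_eq]
    exact root_X_pow_sub_C_pow 2 _
  have hcast : ∀ x : ℤ, algebraMap (ZMod p) K ((x : ℤ) : ZMod p) = ((x : ℤ) : K) :=
    fun x => map_intCast _ _
  have hs2 : s ^ 2 = (P : K) ^ 2 - 4 * (Q : K) := by
    rw [hs2', hcast]; push_cast; ring
  have hsp : s ^ p = -s := by
    calc s ^ p = (s ^ 2) ^ (p / 2) * s := by
          rw [← pow_mul, ← pow_succ, ← hpodd]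
    _ = algebraMap (ZMod p) K (((P ^ 2 - 4 * Q : ℤ) : ZMod p) ^ (p / 2)) * s := by
          rw [hs2', map_pow]
    _ = -s := by rw [heuler, map_neg, map_one, neg_one_mul]
  have hsne : s ≠ 0 := root_X_pow_sub_C_ne_zero (by norm_num) _
  have hzero := cast_lucasU_succ_eq_zero P Q hp hodd s hs2 hsne hsp
  have : ((lucasU P Q (p+1) : ℤ) : ZMod p) = 0 := by
    apply (algebraMap (ZMod p) K).injective
    rw [hcast, hzero, map_zero]
  exact (ZMod.intCast_zmod_eq_zero_iff_dvd _ _).mp this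

end LucasAux

open LucasAux in
theorem lucas_psp_square_factor_preproduct
    (P Q : ℤ) (k p n : ℕ) (hp : p.Prime) (hk : 1 ≤ k)
    (D : ℤ) (hD : D = P ^ 2 - 4 * Q)
    (hn : n = k * p ^ 2)
    (hcomp : ¬ n.Prime) (hn1 : 1 < n)
    (hgcd : Int.gcd (n : ℤ) (2 * Q * D) = 1)
    (heps : jacobiSym D n = -1)
    (hlucas : (n : ℤ) ∣ lucasU P Q (n + 1)) :
    ((p : ℤ) ^ 2) ∣ lucasU P Q (((k : ℤ) - jacobiSym D k).toNat) := by
  classical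
  haveI : Fact p.Prime := ⟨hp⟩
  -- basic coprimality facts
  have hpn : (p:ℤ) ∣ (n:ℤ) := by
    refine ⟨(k : ℤ) * p, ?_⟩; push_cast [hn]; ring
  have hco : IsCoprime ((n:ℤ)) (2*Q*D) := Int.isCoprime_iff_gcd_eq_one.mpr hgcd
  have hpd : ¬ (p:ℤ) ∣ 2*Q*D := by
    intro h
    have := hco.isUnit_of_dvd' hpn h
    rw [Int.isUnit_iff] at this
    have h2 := hp.two_le
    rcases this with h1 | h1 <;> omega
  have hpI : Prime (p:ℤ) := Nat.prime_iff_prime_int.mp hp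
  have hpQ : ¬ (p:ℤ) ∣ Q := fun h => hpd (h.trans ⟨2*D, by ring⟩)
  have hpD : ¬ (p:ℤ) ∣ (P ^ 2 - 4 * Q) := by
    rw [← hD]; exact fun h => hpd (Dvd.dvd.mul_left h (2*Q))
  have podd : p ≠ 2 := by
    intro h
    exact hpd (by rw [h]; exact ⟨Q * D, by ring⟩)
  -- closure properties of { m | p² ∣ U m }
  have hadd : ∀ a b, (p:ℤ)^2 ∣ lucasU P Q a → (p:ℤ)^2 ∣ lucasU P Q b →
      (p:ℤ)^2 ∣ lucasU P Q (a+b) := by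
    intro a b ha hb
    cases a with
    | zero => simpa using hb
    | succ a =>
        rw [show a+1+b = a+b+1 by omega, lucasU_addA]
        exact dvd_sub (ha.mul_right _) (hb.mul_left _)
  have hconsec : ∀ a, (p:ℤ) ∣ lucasU P Q a → (p:ℤ) ∣ lucasU P Q (a+1) → False := by
    intro a h1 h2
    have hsq := lucasU_sq P Q a
    have hdvd : (p:ℤ) ∣ Q ^ a := by
      rw [← hsq]
      exact dvd_add (dvd_sub (dvd_pow h2 two_ne_zero) ((h2.mul_left P).mul_right _))
        ((dvd_pow h1 two_ne_zero).mul_left Q)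
    exact hpQ (hpI.dvd_of_dvd_pow hdvd)
  have hsub : ∀ a b, (p:ℤ)^2 ∣ lucasU P Q (a+1) → (p:ℤ)^2 ∣ lucasU P Q (a+1+b) →
      (p:ℤ)^2 ∣ lucasU P Q b := by
    intro a b h1 h2
    rw [show a+1+b = a+b+1 by omega, lucasU_addA] at h2
    have h3 := dvd_sub (h1.mul_right (lucasU P Q (b+1))) h2
    rw [sub_sub_cancel] at h3
    have hcop : IsCoprime ((p:ℤ)^2) (Q * lucasU P Q a) := by
      apply IsCoprime.pow_left
      rw [hpI.coprime_iff_not_dvd]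
      intro h
      rcases hpI.dvd_mul.mp h with h | h
      · exact hpQ h
      · exact hconsec a h (dvd_trans ⟨(p:ℤ), by ring⟩ h1)
    exact hcop.dvd_of_dvd_mul_left h3
  -- the rank of apparition ω
  have hU1 : (p:ℤ)^2 ∣ lucasU P Q (n+1) := by
    refine dvd_trans ?_ hlucas
    exact ⟨(k : ℤ), by push_cast [hn]; ring⟩
  have hex : ∃ m, 0 < m ∧ (p:ℤ)^2 ∣ lucasU P Q m := ⟨n+1, Nat.succ_pos _, hU1⟩
  set ω := Nat.find hex with hwdef
  have hω := Nat.find_spec hex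
  have hdvd_of : ∀ m, (p:ℤ)^2 ∣ lucasU P Q m → ω ∣ m := by
    intro m
    induction m using Nat.strong_induction_on with
    | _ m ih =>
      intro hm
      rcases Nat.eq_zero_or_pos m with h0 | hpos
      · simp [h0]
      rcases lt_or_ge m ω with hlt | hge
      · exact absurd ⟨hpos, hm⟩ (Nat.find_min hex hlt)
      · have hω1 : ω - 1 + 1 = ω := by omega
        have h1 : (p:ℤ)^2 ∣ lucasU P Q (m - ω) := by
          apply hsub (ω - 1) (m - ω)
          · rw [hω1]; exact hω.2
          · rw [hω1, show ω + (m - ω) = m by omega]; exact hm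
        have h2 : ω ∣ m - ω := ih (m - ω) (by omega) h1
        have h3 := Nat.dvd_add h2 (dvd_refl ω)
        rwa [show m - ω + ω = m by omega] at h3
  have hof_dvd : ∀ m, ω ∣ m → (p:ℤ)^2 ∣ lucasU P Q m := by
    rintro m ⟨c, rfl⟩
    induction c with
    | zero => show (p:ℤ)^2 ∣ lucasU P Q (ω * 0); rw [Nat.mul_zero]; exact dvd_zero _
    | succ c ih =>
        rw [show ω*(c+1) = ω*c + ω by ring]
        exact hadd _ _ ih hω.2
  -- ω ∣ n + 1, and p ∤ ω
  have hωn : ω ∣ n + 1 := hdvd_of _ hU1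
  have hpω : ¬ p ∣ ω := by
    intro h
    have h1 : p ∣ n + 1 := h.trans hωn
    have h2 : p ∣ n := by
      rw [hn]; exact Dvd.dvd.mul_left (dvd_pow_self p two_ne_zero) k
    have := Nat.dvd_sub h1 h2
    rw [Nat.add_sub_cancel_left] at this
    have := Nat.le_of_dvd one_pos this
    have := hp.two_le
    omega
  have hcoω : Nat.Coprime ω p := (Nat.coprime_comm.mp ((hp.coprime_iff_not_dvd).mpr hpω))
  -- ω ∣ k + 1
  obtain ⟨m, hpm⟩ : ∃ m, p = m + 1 := ⟨p - 1, by have := hp.pos; omega⟩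
  have hωk : ω ∣ k + 1 := by
    have hn1' : n + 1 = k*m*(m+2) + (k+1) := by rw [hn, hpm]; ring
    have hfin : ∀ w : ℕ, ω ∣ w → (w = m ∨ w = m + 2) → ω ∣ k + 1 := by
      rintro w hw (rfl | rfl)
      · have h5 : ω ∣ k*w*(w+2) := (hw.mul_left k).mul_right (w+2)
        rw [hn1'] at hωn
        exact (Nat.dvd_add_right h5).mp hωn
      · have h5 : ω ∣ k*m*(m+2) := hw.mul_left (k*m)
        rw [hn1'] at hωn
        exact (Nat.dvd_add_right h5).mp hωn
    by_cases hsq : IsSquare (((P ^ 2 - 4 * Q : ℤ)) : ZMod p)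
    · have h1 := prime_dvd_split P Q hp podd hpQ hpD hsq
      have h2 := lucasU_lift P Q hp.pos _ h1
      have h3 : ω ∣ p * (p - 1) := hdvd_of _ h2
      exact hfin (p-1) (hcoω.dvd_of_dvd_mul_left h3) (Or.inl (by omega))
    · have h1 := prime_dvd_nonsplit P Q hp podd hpD hsq
      have h2 := lucasU_lift P Q hp.pos _ h1
      have h3 : ω ∣ p * (p + 1) := hdvd_of _ h2
      exact hfin (p+1) (hcoω.dvd_of_dvd_mul_left h3) (Or.inr (by omega))
  -- Jacobi symbol of k is -1
  have hJk : jacobiSym D k = -1 := by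
    have hk0 : k ≠ 0 := by omega
    have hp20 : p ^ 2 ≠ 0 := pow_ne_zero _ hp.pos.ne'
    have hmul := jacobiSym.mul_right' D hk0 hp20
    rw [← hn] at hmul
    have hDp : Int.gcd D (p:ℤ) = 1 :=
      Int.isCoprime_iff_gcd_eq_one.mp
        ((hpI.coprime_iff_not_dvd.mpr (by rw [hD]; exact hpD)).symm)
    have hps : jacobiSym D (p ^ 2) = 1 := by
      rw [jacobiSym.pow_right]
      exact jacobiSym.sq_one hDp
    rw [heps, hps, mul_one] at hmul
    omega
  rw [hJk, show (k:ℤ) - (-1) = ((k+1 : ℕ) : ℤ) by push_cast; ring, Int.toNat_natCast]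
  exact hof_dvd _ hωk
end

section
/- Let n = p₁·p₂···p_t be a (b,P,Q)-challenge pseudoprime with distinct prime factors p_i. Let L = lcm(ℓ_b(p₁),...,ℓ_b(p_t)) where ℓ_b(p) is the multiplicative order of b mod p, and W = lcm(ω(p₁),...,ω(p_t)) where ω(p) is the rank of apparition of p for the Lucas sequence (P,Q). Then gcd(L,W) ≤ 2, gcd(n,L) = 1, and gcd(n,W) = 1. -/
/-- The rank of apparition of `p` for the Lucas sequence with parameters `(P, Q)`:
the least `m > 0` such that `p ∣ U_m`. -/
noncomputable def rankApp (P Q : ℤ) (p : ℕ) : ℕ :=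
  sInf {m : ℕ | 0 < m ∧ (p : ℤ) ∣ lucasU P Q m}

/-- A `(b, P, Q)`-challenge pseudoprime: a composite `n` which is a base-`b` Fermat
pseudoprime, a `(P, Q)`-Lucas pseudoprime, and satisfies `(D | n) = -1` where
`D = P² - 4Q` (so the Lucas condition reads `n ∣ U_{n+1}`). -/
def IsChallengePsp (b : ℕ) (P Q : ℤ) (n : ℕ) : Prop :=
  1 < n ∧ ¬ n.Prime ∧
  Nat.Coprime n b ∧ Int.gcd (n : ℤ) (2 * Q * (P ^ 2 - 4 * Q)) = 1 ∧
  b ^ (n - 1) ≡ 1 [MOD n] ∧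
  jacobiSym (P ^ 2 - 4 * Q) n = -1 ∧
  (n : ℤ) ∣ lucasU P Q (n + 1)

namespace lucasU

variable {P Q : ℤ}

theorem add_two (k : ℕ) : lucasU P Q (k + 2) = P * lucasU P Q (k + 1) - Q * lucasU P Q k :=
  rfl

theorem add_add_one (m : ℕ) : ∀ n : ℕ,
    lucasU P Q (m + n + 1) =
      lucasU P Q (m + 1) * lucasU P Q (n + 1) - Q * lucasU P Q m * lucasU P Q n
  | 0 => by simp [lucasU]
  | 1 => by simp [lucasU]; ring
  | n + 2 => by
    have h₁ : lucasU P Q (m + n + 2) =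
        lucasU P Q (m + 1) * lucasU P Q (n + 2) - Q * lucasU P Q m * lucasU P Q (n + 1) :=
      add_add_one m (n + 1)
    have h₀ := add_add_one m n
    rw [show m + (n + 2) + 1 = m + n + 1 + 2 by omega, add_two (m + n + 1), add_two (n + 1)]
    linear_combination P * h₁ - Q * h₀ + Q * lucasU P Q m * add_two (P := P) (Q := Q) n

theorem sq_sub_mul (m : ℕ) :
    lucasU P Q (m + 1) ^ 2 - lucasU P Q m * lucasU P Q (m + 2) = Q ^ m := by
  induction m with
  | zero => simp [lucasU]
  | succ m ih =>
    rw [add_two (m + 1), add_two m] at *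
    linear_combination Q * ih

variable {p : ℤ} (hp : Prime p) (hQ : ¬ p ∣ Q)
include hp hQ

theorem not_dvd_succ_of_dvd {m : ℕ} (hm : p ∣ lucasU P Q m) : ¬ p ∣ lucasU P Q (m + 1) := by
  intro hm₁
  have hQm : p ∣ Q ^ m := by
    rw [← sq_sub_mul]
    exact dvd_sub (dvd_pow hm₁ two_ne_zero) (hm.mul_right _)
  exact hQ (hp.dvd_of_dvd_pow hQm)

theorem dvd_add_iff {a : ℕ} (ha : p ∣ lucasU P Q a) (k : ℕ) :
    p ∣ lucasU P Q (a + k) ↔ p ∣ lucasU P Q k := by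
  rcases k with _ | k
  · simpa [lucasU] using ha
  -- modulo `p`, `U_{a+k+1} ≡ U_{a+1} U_{k+1}` and `U_{a+1}` is invertible
  rw [← add_assoc, add_add_one, dvd_sub_left ((ha.mul_left Q).mul_right _), hp.dvd_mul,
    or_iff_right (not_dvd_succ_of_dvd hp hQ ha)]

theorem dvd_mul_of_dvd {a : ℕ} (ha : p ∣ lucasU P Q a) (k : ℕ) : p ∣ lucasU P Q (a * k) := by
  induction k with
  | zero => simp [lucasU]
  | succ k ih => rw [Nat.mul_succ, dvd_add_iff hp hQ ih]; exact ha

theorem dvd_mod {a n : ℕ} (ha : p ∣ lucasU P Q a) (hn : p ∣ lucasU P Q n) :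
    p ∣ lucasU P Q (n % a) := by
  rw [← Nat.div_add_mod n a, dvd_add_iff hp hQ (dvd_mul_of_dvd hp hQ ha _)] at hn
  exact hn

theorem dvd_gcd {m n : ℕ} (hm : p ∣ lucasU P Q m) (hn : p ∣ lucasU P Q n) :
    p ∣ lucasU P Q (m.gcd n) := by
  induction m, n using Nat.gcd.induction with
  | H0 n => simpa using hn
  | H1 m n _ ih => rw [Nat.gcd_rec]; exact ih (dvd_mod hp hQ hm hn) hm

end lucasU

theorem rankApp_dvd {P Q : ℤ} {p : ℕ} (hp : p.Prime) (hQ : ¬ (p : ℤ) ∣ Q) {m : ℕ}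
    (hm : (p : ℤ) ∣ lucasU P Q m) : rankApp P Q p ∣ m := by
  rcases Nat.eq_zero_or_pos m with rfl | hm₀
  · exact dvd_zero _
  have hpZ : Prime (p : ℤ) := Nat.prime_iff_prime_int.mp hp
  let S : Set ℕ := {k | 0 < k ∧ (p : ℤ) ∣ lucasU P Q k}
  obtain ⟨hr₀, hr⟩ : rankApp P Q p ∈ S := Nat.sInf_mem (⟨m, hm₀, hm⟩ : S.Nonempty)
  have hg : rankApp P Q p ≤ (rankApp P Q p).gcd m :=
    Nat.sInf_le (show _ ∈ S from ⟨Nat.gcd_pos_of_pos_left m hr₀, lucasU.dvd_gcd hpZ hQ hr hm⟩)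
  exact Nat.gcd_eq_left_iff_dvd.mp (Nat.le_antisymm (Nat.gcd_le_left m hr₀) hg)

theorem orderOf_natCast_dvd_of_pow_modEq_one {b k n p : ℕ} (hp : p ∣ n)
    (h : b ^ k ≡ 1 [MOD n]) : orderOf (b : ZMod p) ∣ k := by
  apply orderOf_dvd_of_pow_eq_one
  exact_mod_cast (ZMod.natCast_eq_natCast_iff _ _ _).mpr (h.of_dvd hp)

namespace IsChallengePsp

variable {b : ℕ} {P Q : ℤ} {n : ℕ} (h : IsChallengePsp b P Q n)
include h

theorem not_dvd_Q {p : ℕ} (hp : p.Prime) (hpn : p ∣ n) : ¬ (p : ℤ) ∣ Q := by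
  have hcop : IsCoprime (n : ℤ) (2 * Q * (P ^ 2 - 4 * Q)) :=
    Int.isCoprime_iff_gcd_eq_one.mpr h.2.2.2.1
  intro hpQ
  have hunit :=
    hcop.isUnit_of_dvd' (Int.natCast_dvd_natCast.mpr hpn) ((hpQ.mul_left 2).mul_right _)
  exact (Nat.prime_iff_prime_int.mp hp).not_isUnit hunit

theorem lcm_orderOf_dvd {s : Finset ℕ} (hs : ∀ p ∈ s, p ∣ n) :
    s.lcm (fun p => orderOf (b : ZMod p)) ∣ n - 1 :=
  Finset.lcm_dvd fun p hp => orderOf_natCast_dvd_of_pow_modEq_one (hs p hp) h.2.2.2.2.1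

theorem lcm_rankApp_dvd {s : Finset ℕ} (hs : ∀ p ∈ s, p.Prime ∧ p ∣ n) :
    s.lcm (fun p => rankApp P Q p) ∣ n + 1 :=
  Finset.lcm_dvd fun p hp =>
    rankApp_dvd (hs p hp).1 (h.not_dvd_Q (hs p hp).1 (hs p hp).2)
      ((Int.natCast_dvd_natCast.mpr (hs p hp).2).trans h.2.2.2.2.2.2)

end IsChallengePsp

theorem challenge_psp_admissible
    (b : ℕ) (P Q : ℤ) (n : ℕ) (s : Finset ℕ)
    (hs : ∀ p ∈ s, p.Prime)
    (hn : n = ∏ p ∈ s, p)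
    (hpsp : IsChallengePsp b P Q n)
    (L W : ℕ)
    (hL : L = s.lcm (fun p => orderOf (b : ZMod p)))
    (hW : W = s.lcm (fun p => rankApp P Q p)) :
    Nat.gcd L W ≤ 2 ∧ Nat.gcd n L = 1 ∧ Nat.gcd n W = 1 := by
  have hdvd : ∀ p ∈ s, p ∣ n := fun p hp => hn ▸ Finset.dvd_prod_of_mem _ hp
  have hLn : L ∣ n - 1 := hL ▸ hpsp.lcm_orderOf_dvd hdvd
  have hWn : W ∣ n + 1 := hW ▸ hpsp.lcm_rankApp_dvd fun p hp => ⟨hs p hp, hdvd p hp⟩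
  have hn₁ : 1 ≤ n := hpsp.1.le
  refine ⟨?_, ?_, ?_⟩
  · have hdvd2 : Nat.gcd L W ∣ n + 1 - (n - 1) :=
      Nat.dvd_sub ((Nat.gcd_dvd_right L W).trans hWn) ((Nat.gcd_dvd_left L W).trans hLn)
    have := Nat.le_of_dvd (by omega) hdvd2
    omega
  · exact ((Nat.coprime_self_sub_right hn₁).2 (Nat.coprime_one_right n)).coprime_dvd_right hLn
  · exact (Nat.coprime_self_add_right.2 (Nat.coprime_one_right n)).coprime_dvd_right hWn
end

section
/- If n = k·p is a (b,P,Q)-challenge pseudoprime with p prime and k > 1, then the multiplicative order ℓ_b(p) of b modulo p divides k - 1, and hence p divides b^(k-1) - 1. -/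
theorem challenge_psp_order_divides_preproduct
    (b : ℕ) (P Q : ℤ) (n k p : ℕ) (hp : p.Prime) (hk : 1 < k)
    (hn : n = k * p)
    (hpsp : IsChallengePsp b P Q n) :
    orderOf (b : ZMod p) ∣ (k - 1) ∧ (p : ℤ) ∣ ((b : ℤ) ^ (k - 1) - 1) := by
  obtain ⟨hn1, -, hcop, -, hfer, -, -⟩ := hpsp
  haveI : Fact p.Prime := ⟨hp⟩
  have hpdvd : p ∣ n := ⟨k, by rw [hn, mul_comm]⟩
  have hcoppb : Nat.Coprime p b := Nat.Coprime.coprime_dvd_left hpdvd hcop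
  have hbne : (b : ZMod p) ≠ 0 := by
    rw [Ne, ZMod.natCast_eq_zero_iff]
    exact hp.coprime_iff_not_dvd.mp hcoppb
  have hb0 : b ≠ 0 := by
    rintro rfl
    simp [Nat.coprime_zero_right] at hcop
    omega
  have hone : 1 ≤ b ^ (n - 1) := Nat.one_le_iff_ne_zero.mpr (pow_ne_zero _ hb0)
  have hferp : b ^ (n - 1) ≡ 1 [MOD p] := hfer.of_dvd hpdvd
  have h1 : (b : ZMod p) ^ (n - 1) = 1 := by
    have h := (Nat.modEq_iff_dvd' hone).mp hferp.symm
    have hz : ((b ^ (n - 1) - 1 : ℕ) : ZMod p) = 0 :=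
      (ZMod.natCast_eq_zero_iff _ _).mpr h
    rw [Nat.cast_sub hone] at hz
    push_cast at hz
    linear_combination hz
  have hord1 : orderOf (b : ZMod p) ∣ n - 1 := orderOf_dvd_of_pow_eq_one h1
  have hord2 : orderOf (b : ZMod p) ∣ p - 1 :=
    orderOf_dvd_of_pow_eq_one (ZMod.pow_card_sub_one_eq_one hbne)
  have hsplit : n - 1 = k * (p - 1) + (k - 1) := by
    have hp2 := hp.two_le
    obtain ⟨m, rfl⟩ : ∃ m, p = m + 2 := ⟨p - 2, by omega⟩
    subst hn
    have h1 : k * (m + 2) = k * m + 2 * k := by ring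
    have h2 : k * (m + 2 - 1) = k * m + k := by
      have : m + 2 - 1 = m + 1 := rfl
      rw [this]; ring
    omega
  have hordk : orderOf (b : ZMod p) ∣ k - 1 := by
    have hm : orderOf (b : ZMod p) ∣ k * (p - 1) := hord2.mul_left k
    have hd := Nat.dvd_sub hord1 hm
    rwa [hsplit, Nat.add_sub_cancel_left] at hd
  refine ⟨hordk, ?_⟩
  have hpow : (b : ZMod p) ^ (k - 1) = 1 := orderOf_dvd_iff_pow_eq_one.mp hordk
  have hz : (((b : ℤ) ^ (k - 1) - 1 : ℤ) : ZMod p) = 0 := by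
    push_cast
    rw [hpow]
    ring
  exact (ZMod.intCast_zmod_eq_zero_iff_dvd _ _).mp hz
end

section
/- The number 2047 = 23·89 is a (2,23,131)-challenge pseudoprime: it is composite, 2^2046 ≡ 1 (mod 2047), the Jacobi symbol ((23² - 4·131) | 2047) = (5 | 2047) = -1, and U_2048 ≡ 0 (mod 2047) where U is the Lucas sequence with U₀ = 0, U₁ = 1, U_m = 23·U_{m-1} - 131·U_{m-2}. -/
private def lstep (p : ℕ × ℕ) : ℕ × ℕ := (p.2, (23 * p.2 + 1916 * p.1) % 2047)

private def lg (n : ℕ) : ℕ × ℕ := lstep^[n] (0, 1)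

private lemma lg_spec (n : ℕ) :
    (((lg n).1 : ZMod 2047) = ((lucasU 23 131 n : ℤ) : ZMod 2047)) ∧
    (((lg n).2 : ZMod 2047) = ((lucasU 23 131 (n + 1) : ℤ) : ZMod 2047)) := by
  induction n with
  | zero => constructor <;> rfl
  | succ n ih =>
    obtain ⟨h1, h2⟩ := ih
    have hg : lg (n + 1) = lstep (lg n) := Function.iterate_succ_apply' _ _ _
    constructor
    · rw [hg]; exact h2
    · rw [hg]
      show (((23 * (lg n).2 + 1916 * (lg n).1) % 2047 : ℕ) : ZMod 2047) = _
      rw [ZMod.natCast_mod]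
      push_cast
      rw [h1, h2]
      show _ = ((23 * lucasU 23 131 (n + 1) - 131 * lucasU 23 131 n : ℤ) : ZMod 2047)
      push_cast
      have : (1916 : ZMod 2047) = -131 := by decide
      rw [this]; ring

private lemma lg_add (m n : ℕ) : lg (m + n) = lstep^[m] (lg n) := by
  rw [lg, lg, Function.iterate_add_apply]

set_option maxRecDepth 4000 in
private lemma lg2048 : lg 2048 = (0, 1695) := by
  have h256 : lg 256 = (0, 1076) := by decide
  have h512 : lg 512 = (0, 1221) := by rw [show (512:ℕ) = 256 + 256 from rfl, lg_add, h256]; decide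
  have h768 : lg 768 = (0, 1669) := by rw [show (768:ℕ) = 256 + 512 from rfl, lg_add, h512]; decide
  have h1024 : lg 1024 = (0, 625) := by rw [show (1024:ℕ) = 256 + 768 from rfl, lg_add, h768]; decide
  have h1280 : lg 1280 = (0, 1084) := by rw [show (1280:ℕ) = 256 + 1024 from rfl, lg_add, h1024]; decide
  have h1536 : lg 1536 = (0, 1641) := by rw [show (1536:ℕ) = 256 + 1280 from rfl, lg_add, h1280]; decide
  have h1792 : lg 1792 = (0, 1202) := by rw [show (1792:ℕ) = 256 + 1536 from rfl, lg_add, h1536]; decide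
  rw [show (2048:ℕ) = 256 + 1792 from rfl, lg_add, h1792]; decide

set_option maxRecDepth 2000 in
/-- `2047 = 23·89` is a `(2, 23, 131)`-challenge pseudoprime. -/
theorem two_zero_four_seven_challenge_psp :
    2047 = 23 * 89 ∧
    ¬ Nat.Prime 2047 ∧
    2 ^ 2046 ≡ 1 [MOD 2047] ∧
    (23 : ℤ) ^ 2 - 4 * 131 = 5 ∧
    jacobiSym 5 2047 = -1 ∧
    (2047 : ℤ) ∣ lucasU 23 131 2048 := by
  have hmod : 2 ^ 2046 ≡ 1 [MOD 2047] := by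
    have h : 2 ^ 11 ≡ 1 [MOD 2047] := by decide
    calc 2 ^ 2046 = (2 ^ 11) ^ 186 := by rw [← pow_mul]
    _ ≡ 1 ^ 186 [MOD 2047] := h.pow 186
    _ = 1 := one_pow 186
  refine ⟨by norm_num, by norm_num, hmod, by norm_num, by norm_num, ?_⟩
  have h := (ZMod.intCast_zmod_eq_zero_iff_dvd (lucasU 23 131 2048) 2047).mp
  have h0 : (lg 2048).1 = 0 := by rw [lg2048]
  have := (lg_spec 2048).1
  rw [h0] at this
  exact_mod_cast h (by exact_mod_cast this.symm)
end

section
/- For any real 1 ≤ X < B and fixed base b ≥ 2, the sum over primes p with X < p < B of 1/(p · ℓ_b(p)²) is O(log(B)/X) + O(log(y)/X + log(B)/y²) for any choice of y; in particular, choosing y appropriately, this sum is Õ(X⁻¹), where the implied constants depend on b and logarithmic factors in B. -/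
open scoped Classical

/-!
Group the primes by `d = ℓ_b(p)`. A prime of order `d` divides `b ^ d - 1 < 2 ^ (b * d)`, so at
most `b * d` primes have order `d`, and each of them contributes at most `1 / (X * d ^ 2)`.
Summing `b * d / (X * d ^ 2) = b / (X * d)` over `d ≤ ⌈B⌉` gives `b * H_⌈B⌉ / X`, and the harmonic
number is `O(log B)`.
-/

open Finset

theorem Nat.two_pow_card_primeFactors_le {n : ℕ} (hn : n ≠ 0) : 2 ^ #n.primeFactors ≤ n :=
  (pow_card_le_prod _ _ _ fun _ hp => (Nat.prime_of_mem_primeFactors hp).two_le).trans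
    (Nat.le_of_dvd (Nat.pos_of_ne_zero hn) n.prod_primeFactors_dvd)

theorem card_filter_prime_orderOf_eq_le (s : Finset ℕ) {b d : ℕ} (hb : 2 ≤ b) (hd : d ≠ 0) :
    #{p ∈ s | p.Prime ∧ orderOf (b : ZMod p) = d} ≤ b * d := by
  have hbd : 2 ≤ b ^ d := hb.trans (Nat.le_self_pow hd b)
  have hsub : {p ∈ s | p.Prime ∧ orderOf (b : ZMod p) = d} ⊆ (b ^ d - 1).primeFactors := by
    intro p hps
    obtain ⟨-, hp, rfl⟩ := mem_filter.1 hps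
    have := Fact.mk hp
    refine Nat.mem_primeFactors.2 ⟨hp, (ZMod.natCast_eq_zero_iff _ _).1 ?_, by omega⟩
    rw [Nat.cast_sub (by omega), Nat.cast_pow, pow_orderOf_eq_one, Nat.cast_one, sub_self]
  refine (card_le_card hsub).trans (Nat.pow_lt_pow_iff_right one_lt_two |>.1 ?_).le
  calc 2 ^ #(b ^ d - 1).primeFactors ≤ b ^ d - 1 := Nat.two_pow_card_primeFactors_le (by omega)
    _ < b ^ d := by omega
    _ ≤ (2 ^ b) ^ d := Nat.pow_le_pow_left Nat.lt_two_pow_self.le d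
    _ = 2 ^ (b * d) := (pow_mul 2 b d).symm

theorem orderOf_natCast_mem_Icc {p b : ℕ} (hp : p.Prime) (hpb : ¬ p ∣ b) :
    orderOf (b : ZMod p) ∈ Icc 1 (p - 1) := by
  have := Fact.mk hp
  have hdvd := ZMod.orderOf_dvd_card_sub_one (a := (b : ZMod p))
    (by rwa [Ne, ZMod.natCast_eq_zero_iff])
  have hp1 : 0 < p - 1 := Nat.sub_pos_of_lt hp.one_lt
  exact mem_Icc.2 ⟨Nat.pos_of_dvd_of_pos hdvd hp1, Nat.le_of_dvd hp1 hdvd⟩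

theorem sum_one_div_mul_orderOf_sq_le {b : ℕ} (hb : 2 ≤ b) {X : ℝ} (hX : 0 < X) (n : ℕ) :
    ∑ p ∈ (range n).filter (fun p => p.Prime ∧ ¬ p ∣ b ∧ X < (p : ℝ)),
      1 / ((p : ℝ) * (orderOf (b : ZMod p) : ℝ) ^ 2) ≤ b * harmonic n / X := by
  set S := (range n).filter (fun p => p.Prime ∧ ¬ p ∣ b ∧ X < (p : ℝ))
  have hmaps : ∀ p ∈ S, orderOf (b : ZMod p) ∈ Icc 1 n := by
    intro p hp
    obtain ⟨hpn, hp, hpb, -⟩ := by simpa [S] using hp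
    have := mem_Icc.1 (orderOf_natCast_mem_Icc hp hpb)
    exact mem_Icc.2 ⟨this.1, by omega⟩
  rw [← sum_fiberwise_of_maps_to hmaps, harmonic_eq_sum_Icc, Rat.cast_sum, mul_sum, sum_div]
  refine sum_le_sum fun d hd => ?_
  have hd0 : d ≠ 0 := by simp at hd; omega
  have hcard : #{p ∈ S | orderOf (b : ZMod p) = d} ≤ b * d := by
    refine le_trans (card_le_card ?_) (card_filter_prime_orderOf_eq_le (range n) hb hd0)
    intro p
    simp +contextual [S]
  calc ∑ p ∈ S with orderOf (b : ZMod p) = d, 1 / ((p : ℝ) * (orderOf (b : ZMod p) : ℝ) ^ 2)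
      ≤ ∑ p ∈ S with orderOf (b : ZMod p) = d, 1 / (X * (d : ℝ) ^ 2) := by
        refine sum_le_sum fun p hp => ?_
        obtain ⟨hpS, rfl⟩ := mem_filter.1 hp
        have hXp : X < p := (mem_filter.1 hpS).2.2.2
        gcongr
    _ = #{p ∈ S | orderOf (b : ZMod p) = d} * (1 / (X * (d : ℝ) ^ 2)) := by
        rw [sum_const, nsmul_eq_mul]
    _ ≤ (b * d : ℕ) * (1 / (X * (d : ℝ) ^ 2)) := by gcongr
    _ = b * ((d : ℚ)⁻¹ : ℚ) / X := by push_cast; field_simp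

/-- For a fixed base `b ≥ 2` and reals `1 ≤ X < B`, the sum over primes `X < p < B`
of `1/(p · ℓ_b(p)²)` is `Õ(X⁻¹)`: it is bounded by `C · (log(4 + B))^c / X` for
absolute constants `C, c` depending only on `b`. -/
theorem sum_reciprocal_order_squared (b : ℕ) (hb : 2 ≤ b) :
    ∃ C c : ℝ, 0 < C ∧ 0 < c ∧ ∀ X B : ℝ, 1 ≤ X → X < B →
      ∑ p ∈ (Finset.range ⌈B⌉₊).filter
          (fun p => p.Prime ∧ ¬ p ∣ b ∧ X < (p : ℝ)),
        1 / ((p : ℝ) * ((orderOf (b : ZMod p) : ℝ)) ^ 2)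
      ≤ C * (Real.log (4 + B)) ^ c / X := by
  refine ⟨2 * b, 1, by positivity, one_pos, fun X B hX hXB => ?_⟩
  have hceil_pos : (0 : ℝ) < ⌈B⌉₊ := Nat.cast_pos.2 (Nat.ceil_pos.2 (by linarith))
  have hceil : (⌈B⌉₊ : ℝ) ≤ 4 + B := by linarith [Nat.ceil_lt_add_one (by linarith : 0 ≤ B)]
  have hlog : 1 ≤ Real.log (4 + B) := by
    rw [Real.le_log_iff_exp_le (by linarith)]
    linarith [Real.exp_one_lt_d9]
  calc _ ≤ b * harmonic ⌈B⌉₊ / X := sum_one_div_mul_orderOf_sq_le hb (by linarith) _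
    _ ≤ b * (1 + Real.log ⌈B⌉₊) / X := by gcongr; exact harmonic_le_one_add_log _
    _ ≤ b * (2 * Real.log (4 + B)) / X := by gcongr; linarith [Real.log_le_log hceil_pos hceil]
    _ = _ := by rw [Real.rpow_one]; ring
end

section
/- If n = k·p² is a base-2 Fermat pseudoprime and simultaneously a (1,-1)-Lucas pseudoprime with ε(n) = (5|n) = -1, where p is prime, then p is both a Wieferich prime (2^(p-1) ≡ 1 mod p²) and a Wall–Sun–Sun prime (F_{p-ε(p)} ≡ 0 mod p², with F the Fibonacci sequence). -/
open Polynomial in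
theorem fib_entry (p : ℕ) [hp : Fact p.Prime] (hp2 : p ≠ 2) (hp5 : p ≠ 5) :
    p ∣ Nat.fib (((p : ℤ) - jacobiSym 5 p).toNat) := by
  have hodd : p % 2 = 1 := Nat.odd_iff.mp (hp.out.odd_of_ne_two hp2)
  have hplarge : 3 ≤ p := by
    have h2 := hp.out.two_le
    rcases Nat.lt_or_ge p 3 with h | h
    · interval_cases p <;> simp_all
    · exact h
  have h5 : ((5 : ℤ) : ZMod p) ≠ 0 := by
    rw [show ((5:ℤ) : ZMod p) = ((5:ℕ) : ZMod p) by push_cast; ring,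
      Ne, ZMod.natCast_eq_zero_iff]
    intro h
    exact hp5 ((Nat.prime_dvd_prime_iff_eq hp.out (by norm_num)).mp h)
  have hl : legendreSym p 5 = jacobiSym 5 p := jacobiSym.legendreSym.to_jacobiSym p 5
  have heps : jacobiSym 5 p = 1 ∨ jacobiSym 5 p = -1 := by
    rw [← hl]; exact legendreSym.eq_one_or_neg_one p h5
  set f : Polynomial (ZMod p) := X ^ 2 - C 5 with hf
  have hdeg : f.degree ≠ 0 := by
    rw [hf, degree_X_pow_sub_C (by norm_num)]; norm_num
  have hinj : Function.Injective (AdjoinRoot.of f) :=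
    AdjoinRoot.of.injective_of_degree_ne_zero hdeg
  haveI : CharP (AdjoinRoot f) p := charP_of_injective_ringHom hinj p
  set s : AdjoinRoot f := AdjoinRoot.root f with hsdef
  have hs2 : s ^ 2 = 5 := by
    have h0 : (AdjoinRoot.mk f) f = 0 := AdjoinRoot.mk_self
    rw [hf] at h0
    rw [map_sub, map_pow, AdjoinRoot.mk_X, sub_eq_zero] at h0
    rw [hsdef, h0, AdjoinRoot.mk_C, map_ofNat]
  -- units
  have h5R : (5 : AdjoinRoot f) = AdjoinRoot.of f (5 : ZMod p) := by rw [map_ofNat]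
  have h5u : IsUnit (5 : AdjoinRoot f) := by
    rw [h5R]
    exact ((ZMod.isUnit_iff_coprime 5 p).mpr
      ((Nat.coprime_primes (by norm_num) hp.out).mpr (Ne.symm hp5))).map _
  have h2u : IsUnit (2 : AdjoinRoot f) := by
    rw [show (2 : AdjoinRoot f) = AdjoinRoot.of f (2 : ZMod p) by rw [map_ofNat]]
    exact ((ZMod.isUnit_iff_coprime 2 p).mpr
      ((Nat.coprime_primes (by norm_num) hp.out).mpr (Ne.symm hp2))).map _
  have hsu : IsUnit s := isUnit_of_mul_isUnit_left (y := s) (by rw [← sq, hs2]; exact h5u)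
  -- key identity
  have key : ∀ n : ℕ, (1+s)^n - (1-s)^n = 2^n * s * (Nat.fib n : AdjoinRoot f) := by
    have step : ∀ n : ℕ, (1+s)^n - (1-s)^n = 2^n * s * (Nat.fib n : AdjoinRoot f) →
        (1+s)^(n+1) - (1-s)^(n+1) = 2^(n+1) * s * (Nat.fib (n+1) : AdjoinRoot f) →
        (1+s)^(n+2) - (1-s)^(n+2) = 2^(n+2) * s * (Nat.fib (n+2) : AdjoinRoot f) := by
      intro n h0 h1
      have ha : (1+s)^(n+2) = 2*(1+s)^(n+1) + 4*(1+s)^n := by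
        have : (1+s)^2 = 2*(1+s) + 4 := by rw [add_sq, hs2]; ring
        calc (1+s)^(n+2) = (1+s)^n * (1+s)^2 := by ring
        _ = 2*(1+s)^(n+1) + 4*(1+s)^n := by rw [this]; ring
      have hb : (1-s)^(n+2) = 2*(1-s)^(n+1) + 4*(1-s)^n := by
        have : (1-s)^2 = 2*(1-s) + 4 := by rw [sub_sq, hs2]; ring
        calc (1-s)^(n+2) = (1-s)^n * (1-s)^2 := by ring
        _ = 2*(1-s)^(n+1) + 4*(1-s)^n := by rw [this]; ring
      have hfib : (Nat.fib (n+2) : AdjoinRoot f) = Nat.fib (n+1) + Nat.fib n := by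
        rw [Nat.fib_add_two]; push_cast; ring
      rw [ha, hb, hfib]
      linear_combination 2 * h1 + 4 * h0
    intro n
    induction n using Nat.twoStepInduction with
    | zero => simp
    | one => simp [Nat.fib_one]; ring
    | more n h0 h1 => exact step n h0 h1
  -- Frobenius on s
  have hsp : s ^ p = AdjoinRoot.of f ((jacobiSym 5 p : ℤ) : ZMod p) * s := by
    have hpe : p = 2 * (p / 2) + 1 := by omega
    calc s ^ p = (s^2)^(p/2) * s := by rw [← pow_mul, ← pow_succ, ← hpe]
    _ = AdjoinRoot.of f ((5 : ZMod p)^(p/2)) * s := by rw [hs2, map_pow, ← h5R]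
    _ = AdjoinRoot.of f ((jacobiSym 5 p : ℤ) : ZMod p) * s := by
        rw [← hl, legendreSym.eq_pow]; norm_num
  have conc : ∀ m : ℕ, (Nat.fib m : AdjoinRoot f) = 0 → p ∣ Nat.fib m := by
    intro m hm
    rw [← map_natCast (AdjoinRoot.of f)] at hm
    have h0 : ((Nat.fib m : ZMod p)) = 0 := hinj (by rw [hm, map_zero])
    exact (ZMod.natCast_eq_zero_iff _ _).mp h0
  rcases heps with he | he
  · -- fib (p-1) ≡ 0
    have hsp1 : s ^ p = s := by rw [hsp, he]; simp
    have hfr : (1+s)^p = 1 + s := by rw [add_pow_char, one_pow, hsp1]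
    have hfr' : (1-s)^p = 1 - s := by rw [sub_pow_char, one_pow, hsp1]
    have hau : IsUnit (1+s) := by
      apply isUnit_of_mul_isUnit_left (y := 1-s)
      have : (1+s)*(1-s) = -4 := by rw [show (1+s)*(1-s) = 1 - s^2 by ring, hs2]; ring
      rw [this, show (-4 : AdjoinRoot f) = -(2*2) by norm_num]
      exact (h2u.mul h2u).neg
    have hbu : IsUnit (1-s) := by
      apply isUnit_of_mul_isUnit_left (y := 1+s)
      have : (1-s)*(1+s) = -(2*2) := by
        rw [show (1-s)*(1+s) = 1 - s^2 by ring, hs2]; norm_num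
      rw [this]
      exact (h2u.mul h2u).neg
    have hap : (1+s)^(p-1) = 1 := by
      apply hau.mul_right_cancel
      rw [← pow_succ, show p-1+1 = p by omega, hfr, one_mul]
    have hbp : (1-s)^(p-1) = 1 := by
      apply hbu.mul_right_cancel
      rw [← pow_succ, show p-1+1 = p by omega, hfr', one_mul]
    have hz : (Nat.fib (p-1) : AdjoinRoot f) = 0 := by
      have hk := key (p-1)
      rw [hap, hbp, sub_self] at hk
      exact (((h2u.pow (p-1)).mul hsu).mul_right_eq_zero).mp hk.symm
    have : ((p : ℤ) - jacobiSym 5 p).toNat = p - 1 := by rw [he]; omega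
    rw [this]
    exact conc _ hz
  · -- fib (p+1) ≡ 0
    have hsp1 : s ^ p = -s := by
      rw [hsp, he]
      simp
    have hfr : (1+s)^p = 1 - s := by rw [add_pow_char, one_pow, hsp1]; ring
    have hfr' : (1-s)^p = 1 + s := by rw [sub_pow_char, one_pow, hsp1]; ring
    have hz : (Nat.fib (p+1) : AdjoinRoot f) = 0 := by
      have hk := key (p+1)
      rw [pow_succ, pow_succ, hfr, hfr',
        show (1-s)*(1+s) - (1+s)*(1-s) = 0 by ring] at hk
      exact (((h2u.pow (p+1)).mul hsu).mul_right_eq_zero).mp hk.symm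
    have : ((p : ℤ) - jacobiSym 5 p).toNat = p + 1 := by rw [he]; omega
    rw [this]
    exact conc _ hz

lemma fib_mul_sq (p m : ℕ) (hp : p.Prime) (hm : 1 ≤ m) (hdvd : p ∣ Nat.fib m) :
    p ^ 2 ∣ Nat.fib (p * m) := by
  obtain ⟨c, hc⟩ := hdvd
  obtain ⟨j, rfl⟩ : ∃ j, m = j + 1 := ⟨m - 1, by omega⟩
  set m := j + 1 with hmdef
  set F : ℤ := (Nat.fib (m + 1) : ℤ) with hF
  have hw : (Nat.fib j : ℤ) = F - p * c := by
    have := Nat.fib_add_two (n := j)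
    have hcast : (Nat.fib (j + 2) : ℤ) = Nat.fib j + Nat.fib (j + 1) := by
      rw [this]; push_cast; ring
    rw [hF, show m + 1 = j + 2 by omega, hcast, hc]
    push_cast; ring
  have claim : ∀ kk : ℕ, ∃ x y z : ℤ,
      (Nat.fib (kk * m + 1) : ℤ) = F ^ kk + p * x ∧
      (Nat.fib (kk * m) : ℤ) * F = kk * p * c * F ^ kk + p ^ 2 * y ∧
      (Nat.fib (kk * m) : ℤ) = p * z := by
    intro kk
    induction kk with
    | zero => exact ⟨0, 0, 0, by simp, by simp, by simp⟩
    | succ k ih =>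
      obtain ⟨x, y, z, hB, hA, hC⟩ := ih
      have e1 : (Nat.fib ((k+1) * m + 1) : ℤ) =
          (Nat.fib (k * m) : ℤ) * (p * c) + (Nat.fib (k * m + 1) : ℤ) * F := by
        have h := Nat.fib_add (k * m) m
        have : (k+1) * m + 1 = k * m + m + 1 := by ring
        rw [this, h, hc, hF]
        push_cast; ring
      have e2 : (Nat.fib ((k+1) * m) : ℤ) =
          (Nat.fib (k * m) : ℤ) * (Nat.fib j : ℤ) + (Nat.fib (k * m + 1) : ℤ) * (p * c) := by
        have h := Nat.fib_add (k * m) j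
        have : (k+1) * m = k * m + j + 1 := by rw [hmdef]; ring
        rw [this, h, show j + 1 = m from rfl, hc]
        push_cast; ring
      refine ⟨c * p * z + x * F, -(k:ℤ) * c^2 * F^k + y * (F - p*c) + x * c * F,
        z * (Nat.fib j : ℤ) + (Nat.fib (k*m+1) : ℤ) * c, ?_, ?_, ?_⟩
      · rw [e1, hC, hB]; ring
      · rw [e2, hw, hB]
        push_cast
        linear_combination (F - (p:ℤ) * c) * hA
      · rw [e2, hC]; ring
  obtain ⟨x, y, z, hB, hA, hC⟩ := claim p
  have hdvdZ : ((p:ℤ))^2 ∣ (Nat.fib (p * m) : ℤ) * F := by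
    exact ⟨(c : ℤ) * F ^ p + y, by linear_combination hA⟩
  have hdvdN : p^2 ∣ Nat.fib (p * m) * Nat.fib (m + 1) := by
    have : ((p^2 : ℕ) : ℤ) ∣ ((Nat.fib (p * m) * Nat.fib (m + 1) : ℕ) : ℤ) := by
      push_cast
      exact hdvdZ
    exact_mod_cast this
  have hcop : Nat.Coprime (p^2) (Nat.fib (m+1)) := by
    apply Nat.Coprime.pow_left
    rw [hp.coprime_iff_not_dvd]
    intro hdvd'
    have hcf := Nat.fib_coprime_fib_succ m
    have : p ∣ Nat.gcd (Nat.fib m) (Nat.fib (m+1)) :=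
      Nat.dvd_gcd ⟨c, hc⟩ hdvd'
    rw [hcf] at this
    exact hp.one_lt.ne' (Nat.dvd_one.mp this)
  exact (Nat.Coprime.dvd_of_dvd_mul_right hcop) hdvdN


/-- If `n = k·p²` is a base-2 Fermat pseudoprime and simultaneously a `(1,-1)`-Lucas
(Fibonacci) pseudoprime with `(5 | n) = -1`, where `p` is prime, then `p` is both a
Wieferich prime and a Wall–Sun–Sun prime. -/
theorem square_factor_wieferich_and_wallsunsun
    (k p n : ℕ) (hp : p.Prime) (hk : 1 ≤ k)
    (hn : n = k * p ^ 2)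
    (hcomp : ¬ n.Prime) (hn1 : 1 < n)
    (hgcd : Nat.Coprime n 10)
    (hferm : 2 ^ (n - 1) ≡ 1 [MOD n])
    (heps : jacobiSym 5 n = -1)
    (hfib : n ∣ Nat.fib (n + 1)) :
    2 ^ (p - 1) ≡ 1 [MOD p ^ 2] ∧
    (p : ℤ) ^ 2 ∣ (Nat.fib (((p : ℤ) - jacobiSym 5 p).toNat) : ℤ) := by
  haveI : Fact p.Prime := ⟨hp⟩
  have hp2dvd : p ^ 2 ∣ n := hn ▸ Dvd.intro k (mul_comm (p^2) k)
  have hpdvd : p ∣ n := dvd_trans (dvd_pow_self p two_ne_zero) hp2dvd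
  have hpcop : Nat.Coprime p 10 := Nat.Coprime.coprime_dvd_left hpdvd hgcd
  have hp2 : p ≠ 2 := by rintro rfl; simp [Nat.Coprime] at hpcop
  have hp5 : p ≠ 5 := by rintro rfl; simp [Nat.Coprime] at hpcop
  have hodd : p % 2 = 1 := Nat.odd_iff.mp (hp.odd_of_ne_two hp2)
  have hple := hp.two_le
  have hpn1 : ¬ p ∣ (n - 1) := by
    intro h
    have h2 := Nat.dvd_sub hpdvd h
    rw [Nat.sub_sub_self (le_of_lt hn1)] at h2
    exact absurd (Nat.dvd_one.mp h2) (by omega)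
  constructor
  · -- Wieferich
    have h1 : 2 ^ (n-1) ≡ 1 [MOD p^2] := hferm.of_dvd hp2dvd
    have hcop2 : Nat.Coprime 2 (p^2) := (Nat.coprime_primes (by norm_num) hp).mpr (Ne.symm hp2) |>.pow_right 2
    haveI : NeZero (p^2) := ⟨pow_ne_zero 2 hp.pos.ne'⟩
    set u : (ZMod (p^2))ˣ := ZMod.unitOfCoprime 2 hcop2 with hu
    have hcoe : (u : ZMod (p^2)) = 2 := by simp [hu, ZMod.coe_unitOfCoprime]
    have hu1 : u ^ (n - 1) = 1 := by
      ext
      push_cast [hcoe]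
      have := (ZMod.natCast_eq_natCast_iff _ _ _).mpr h1
      push_cast at this
      exact this
    have hord1 : orderOf u ∣ n - 1 := orderOf_dvd_of_pow_eq_one hu1
    have hord2 : orderOf u ∣ p * (p - 1) := by
      have := ZMod.pow_totient u
      have ht : Nat.totient (p^2) = p * (p-1) := by
        rw [Nat.totient_prime_pow hp (by norm_num)]
        norm_num
      exact orderOf_dvd_of_pow_eq_one (by rw [← ht]; exact this)
    have hordp : ¬ p ∣ orderOf u := fun h => hpn1 (dvd_trans h hord1)
    have hdp1 : orderOf u ∣ p - 1 :=
      (Nat.coprime_comm.mp (hp.coprime_iff_not_dvd.mpr hordp)).dvd_of_dvd_mul_left hord2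
    have hup : u ^ (p-1) = 1 := orderOf_dvd_iff_pow_eq_one.mp hdp1
    have hz : ((2 : ZMod (p^2)))^(p-1) = 1 := by
      have hval := congrArg (Units.val) hup
      rw [Units.val_pow_eq_pow_val, hcoe, Units.val_one] at hval
      exact hval
    have hcast : ((2^(p-1) : ℕ) : ZMod (p^2)) = ((1:ℕ) : ZMod (p^2)) := by
      push_cast
      exact hz
    exact (ZMod.natCast_eq_natCast_iff _ _ _).mp hcast
  · -- Wall-Sun-Sun
    set e : ℕ := ((p : ℤ) - jacobiSym 5 p).toNat with he
    have hpe : p ∣ Nat.fib e := fib_entry p hp2 hp5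
    have he1 : 1 ≤ e := by
      have : jacobiSym 5 p = 1 ∨ jacobiSym 5 p = -1 := by
        rw [← jacobiSym.legendreSym.to_jacobiSym p 5]
        apply legendreSym.eq_one_or_neg_one
        rw [show ((5:ℤ) : ZMod p) = ((5:ℕ) : ZMod p) by push_cast; ring,
          Ne, ZMod.natCast_eq_zero_iff]
        intro h
        exact hp5 ((Nat.prime_dvd_prime_iff_eq hp (by norm_num)).mp h)
      rcases this with h | h <;> rw [he, h] <;> omega
    have h2 : p ^ 2 ∣ Nat.fib (p * e) := fib_mul_sq p e hp he1 hpe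
    have hfn : p ^ 2 ∣ Nat.fib (n + 1) := hp2dvd.trans hfib
    set d : ℕ := Nat.gcd (n+1) (p*e) with hd
    have hdfib : p ^ 2 ∣ Nat.fib d := by
      rw [hd, Nat.fib_gcd]
      exact Nat.dvd_gcd hfn h2
    have hpnd : ¬ p ∣ d := by
      intro h
      have h1 : p ∣ n + 1 := h.trans (Nat.gcd_dvd_left _ _)
      have := Nat.dvd_sub h1 hpdvd
      simp at this
      omega
    have hde : d ∣ e := by
      have h1 : d ∣ p * e := Nat.gcd_dvd_right _ _
      have hcop : Nat.Coprime d p := (Nat.coprime_comm.mp (hp.coprime_iff_not_dvd.mpr hpnd))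
      exact hcop.dvd_of_dvd_mul_left h1
    have final : p ^ 2 ∣ Nat.fib e := hdfib.trans (Nat.fib_dvd d e hde)
    exact_mod_cast Int.natCast_dvd_natCast.mpr final
end
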